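/- arXiv:1203.4947 — 6 statements merged into one kernel-verified Lean document; each statement's English description precedes it below -/
import Mathlib

section
/- Let f(z) = Σ φ_n z^n be a formal power series, m ≥ 1, C ≥ 1, and suppose there exists n₀ such that for every n ≥ n₀ there is an index n' ∈ {n-1,...,n-m} with |φ_n| ≤ C|φ_{n'}|. Then limsup_{n→∞} |φ_n|^{1/n} ≤ C, i.e., the radius of convergence of the series is at least 1/C > 0. -/
open Filter ENNReal Topology

/-! If every late coefficient is at most `C` times an earlier one, strong induction gives
`‖φ n‖ ≤ C ^ n * B` for all `n`, with `B` bounding the finitely many initial coefficients.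
Taking `n`-th roots, `‖φ n‖ ^ (1 / n) ≤ C * B ^ (1 / n)`, and `B ^ (1 / n) → 1`. -/

theorem le_pow_mul_of_le_mul_earlier {a : ℕ → ℝ} {C B : ℝ} {n₀ : ℕ} (hC : 1 ≤ C) (hB : 0 ≤ B)
    (hinit : ∀ n < n₀, a n ≤ B) (hstep : ∀ n, n₀ ≤ n → ∃ n' < n, a n ≤ C * a n') (n : ℕ) :
    a n ≤ C ^ n * B := by
  induction n using Nat.strong_induction_on with
  | _ n ih =>
    rcases lt_or_ge n n₀ with hn | hn
    · exact (hinit n hn).trans (le_mul_of_one_le_left hB (one_le_pow₀ hC))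
    · obtain ⟨n', hlt, hle⟩ := hstep n hn
      calc a n ≤ C * a n' := hle
        _ ≤ C * (C ^ n' * B) := mul_le_mul_of_nonneg_left (ih n' hlt) (by linarith)
        _ = C ^ (n' + 1) * B := by ring
        _ ≤ C ^ n * B := mul_le_mul_of_nonneg_right (pow_le_pow_right₀ hC hlt) hB

theorem ENNReal.tendsto_rpow_one_div_natCast {B : ℝ≥0∞} (hB0 : B ≠ 0) (hBtop : B ≠ ⊤) :
    Tendsto (fun n : ℕ => B ^ (1 / (n : ℝ))) atTop (𝓝 1) := by
  lift B to NNReal using hBtop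
  have hpos : (0 : ℝ) < B := by exact_mod_cast pos_iff_ne_zero.mpr (coe_ne_zero.mp hB0)
  have hreal : Tendsto (fun n : ℕ => (B : ℝ) ^ (1 / (n : ℝ))) atTop (𝓝 1) := by
    simpa [Function.comp_def] using
      (Real.continuousAt_const_rpow hpos.ne').tendsto.comp tendsto_one_div_atTop_nhds_zero_nat
  convert (ENNReal.continuous_ofReal.tendsto 1).comp hreal using 1
  · funext n
    simp only [Function.comp_apply, ← ofReal_rpow_of_pos hpos, ofReal_coe_nnreal]
  · simp

theorem ENNReal.limsup_rpow_one_div_le_of_le_pow_mul {x : ℕ → ℝ≥0∞} {c B : ℝ≥0∞}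
    (hB0 : B ≠ 0) (hBtop : B ≠ ⊤) (hx : ∀ᶠ n in atTop, x n ≤ c ^ n * B) :
    limsup (fun n : ℕ => x n ^ (1 / (n : ℝ))) atTop ≤ c := by
  have hroot : ∀ᶠ n : ℕ in atTop, x n ^ (1 / (n : ℝ)) ≤ c * B ^ (1 / (n : ℝ)) := by
    filter_upwards [hx, eventually_ne_atTop 0] with n hn hn0
    calc x n ^ (1 / (n : ℝ)) ≤ (c ^ n * B) ^ (1 / (n : ℝ)) := rpow_le_rpow hn (by positivity)
      _ = c * B ^ (1 / (n : ℝ)) := by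
        rw [mul_rpow_of_nonneg _ _ (by positivity), one_div, pow_rpow_inv_natCast hn0]
  have hlim : Tendsto (fun n : ℕ => c * B ^ (1 / (n : ℝ))) atTop (𝓝 c) := by
    simpa using ENNReal.Tendsto.const_mul (tendsto_rpow_one_div_natCast hB0 hBtop)
      (Or.inl one_ne_zero)
  exact (limsup_le_limsup hroot).trans_eq hlim.limsup_eq

theorem stmt0_general (φ : ℕ → ℂ) (m : ℕ) (C : ℝ) (hC : 1 ≤ C)
    (h : ∃ n₀ : ℕ, ∀ n, n₀ ≤ n → ∃ n' : ℕ, n' < n ∧ n ≤ n' + m ∧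
      ‖φ n‖ ≤ C * ‖φ n'‖) :
    Filter.limsup (fun n : ℕ => (‖φ n‖₊ : ℝ≥0∞) ^ (1 / (n : ℝ))) Filter.atTop
      ≤ ENNReal.ofReal C := by
  obtain ⟨n₀, hn₀⟩ := h
  obtain ⟨B, hB⟩ := ((Set.finite_Iio n₀).image (‖φ ·‖)).bddAbove
  have hbound (n : ℕ) : ‖φ n‖ ≤ C ^ n * max B 1 :=
    le_pow_mul_of_le_mul_earlier hC (by positivity)
      (fun k hk => (hB ⟨k, hk, rfl⟩).trans (le_max_left _ _))
      (fun k hk => let ⟨k', hlt, _, hle⟩ := hn₀ k hk; ⟨k', hlt, hle⟩) n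
  refine limsup_rpow_one_div_le_of_le_pow_mul (B := ENNReal.ofReal (max B 1))
    (by simp) ofReal_ne_top (Eventually.of_forall fun n => ?_)
  rw [← ofReal_coe_nnreal, coe_nnnorm, ← ofReal_pow (by linarith),
    ← ofReal_mul (by positivity)]
  exact ofReal_le_ofReal (hbound n)

/-- If `f(z) = Σ φ_n z^n`, `m ≥ 1`, `C ≥ 1`, and there is `n₀` such that for every `n ≥ n₀`
there is `n' ∈ {n-1, …, n-m}` with `|φ_n| ≤ C |φ_{n'}|`, then
`limsup |φ_n|^{1/n} ≤ C`, i.e. the radius of convergence is at least `1/C > 0`. -/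
theorem stmt0 (φ : ℕ → ℂ) (m : ℕ) (hm : 1 ≤ m) (C : ℝ) (hC : 1 ≤ C)
    (h : ∃ n₀ : ℕ, ∀ n, n₀ ≤ n → ∃ n' : ℕ, n' < n ∧ n ≤ n' + m ∧
      ‖φ n‖ ≤ C * ‖φ n'‖) :
    Filter.limsup (fun n : ℕ => (‖φ n‖₊ : ℝ≥0∞) ^ (1 / (n : ℝ))) Filter.atTop
      ≤ ENNReal.ofReal C :=
  stmt0_general φ m C hC h
end

section
/- Let (φ_n) be a sequence of complex numbers, m ≥ 1, C ≥ 1, and suppose there exists n₀ with φ_{n₀} ≠ 0 such that for every n ≥ n₀ there is an index n' ∈ {n+1,...,n+m} with |φ_{n'}| ≥ |φ_n|/C. Then limsup_{n→∞} |φ_n|^{1/n} ≥ 1/C; in particular the radius of convergence of Σ φ_n z^n is at most C < ∞. -/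
/-!
Iterating the hypothesis from `n₀` gives, for every `k`, an index `n ≥ k` with
`‖φ n‖ ≥ ‖φ n₀‖ / C ^ k ≥ ‖φ n₀‖ / C ^ n`. Along these indices `‖φ n‖ ^ (1 / n)` is at least
`‖φ n₀‖ ^ (1 / n) / C`, which tends to `1 / C`.
-/

open Filter ENNReal Topology

lemma exists_div_pow_le_of_step (u : ℕ → ℝ) {C : ℝ} (hC : 0 ≤ C) {n₀ : ℕ}
    (hstep : ∀ n, n₀ ≤ n → ∃ n', n < n' ∧ u n / C ≤ u n') (k : ℕ) :
    ∃ n, n₀ + k ≤ n ∧ u n₀ / C ^ k ≤ u n := by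
  induction k with
  | zero => exact ⟨n₀, le_rfl, by simp⟩
  | succ k ih =>
    obtain ⟨n, hn, hun⟩ := ih
    obtain ⟨n', hnn', hun'⟩ := hstep n (by omega)
    refine ⟨n', by omega, ?_⟩
    calc u n₀ / C ^ (k + 1) = u n₀ / C ^ k / C := by rw [pow_succ, div_div]
      _ ≤ u n / C := by gcongr
      _ ≤ u n' := hun'

lemma rpow_one_div_div_le_rpow_one_div {A C x : ℝ} (hA : 0 < A) (hC : 1 ≤ C) {k n : ℕ}
    (hkn : k ≤ n) (h : A / C ^ k ≤ x) : A ^ (1 / n : ℝ) / C ≤ x ^ (1 / n : ℝ) := by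
  have hCk : C ^ ((k : ℝ) * (1 / n)) ≤ C := by
    refine Real.rpow_le_self_of_one_le hC ?_
    rw [mul_one_div]
    exact div_le_one_of_le₀ (by exact_mod_cast hkn) n.cast_nonneg
  calc A ^ (1 / n : ℝ) / C ≤ A ^ (1 / n : ℝ) / C ^ ((k : ℝ) * (1 / n)) := by gcongr
    _ = (A / C ^ k) ^ (1 / n : ℝ) := by
      rw [Real.div_rpow hA.le (by positivity), ← Real.rpow_natCast,
        ← Real.rpow_mul (by positivity)]
    _ ≤ x ^ (1 / n : ℝ) := by gcongr

lemma ofReal_one_div_le_limsup_rpow_one_div (u : ℕ → ℝ) {A C : ℝ} (hA : 0 < A) (hC : 1 ≤ C)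
    (h : ∀ k, ∃ n, k ≤ n ∧ A / C ^ k ≤ u n) :
    ENNReal.ofReal (1 / C) ≤
      limsup (fun n : ℕ => ENNReal.ofReal (u n) ^ (1 / (n : ℝ))) atTop := by
  choose a hka hua using h
  have ha : Tendsto a atTop atTop := tendsto_atTop_mono hka tendsto_id
  have hlow : Tendsto (fun k => ENNReal.ofReal (A ^ (1 / (a k : ℝ)) / C)) atTop
      (𝓝 (ENNReal.ofReal (1 / C))) := by
    have hA_root : Tendsto (fun k => A ^ (1 / (a k : ℝ))) atTop (𝓝 1) := by
      simpa using tendsto_const_nhds.rpow (tendsto_one_div_atTop_nhds_zero_nat.comp ha)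
        (Or.inl hA.ne')
    exact ENNReal.tendsto_ofReal (by simpa using hA_root.div_const C)
  have hle (k : ℕ) : ENNReal.ofReal (A ^ (1 / (a k : ℝ)) / C) ≤
      ENNReal.ofReal (u (a k)) ^ (1 / (a k : ℝ)) := by
    have hu : 0 < u (a k) := lt_of_lt_of_le (by positivity) (hua k)
    rw [ENNReal.ofReal_rpow_of_pos hu]
    exact ENNReal.ofReal_le_ofReal (rpow_one_div_div_le_rpow_one_div hA hC (hka k) (hua k))
  calc ENNReal.ofReal (1 / C)
        = limsup (fun k => ENNReal.ofReal (A ^ (1 / (a k : ℝ)) / C)) atTop := hlow.limsup_eq.symm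
    _ ≤ limsup ((fun n : ℕ => ENNReal.ofReal (u n) ^ (1 / (n : ℝ))) ∘ a) atTop :=
        limsup_le_limsup (Eventually.of_forall hle)
    _ ≤ _ := ha.limsup_comp_le_limsup

theorem stmt1_general (φ : ℕ → ℂ) (m : ℕ) (C : ℝ) (hC : 1 ≤ C)
    (h : ∃ n₀ : ℕ, φ n₀ ≠ 0 ∧ ∀ n, n₀ ≤ n → ∃ n' : ℕ, n < n' ∧ n' ≤ n + m ∧
      ‖φ n‖ / C ≤ ‖φ n'‖) :
    ENNReal.ofReal (1 / C) ≤
      Filter.limsup (fun n : ℕ => (‖φ n‖₊ : ℝ≥0∞) ^ (1 / (n : ℝ))) Filter.atTop := by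
  obtain ⟨n₀, hφ₀, hstep⟩ := h
  have hgrowth (k : ℕ) : ∃ n, k ≤ n ∧ ‖φ n₀‖ / C ^ k ≤ ‖φ n‖ := by
    obtain ⟨n, hn, hφn⟩ := exists_div_pow_le_of_step (fun n => ‖φ n‖) (zero_le_one.trans hC)
      (fun n hn => (hstep n hn).imp fun n' hn' => ⟨hn'.1, hn'.2.2⟩) k
    exact ⟨n, by omega, hφn⟩
  simpa only [ofReal_norm, enorm_eq_nnnorm] using
    ofReal_one_div_le_limsup_rpow_one_div (fun n => ‖φ n‖) (norm_pos_iff.mpr hφ₀) hC hgrowth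

/-- If `(φ_n)` is a sequence in `ℂ`, `m ≥ 1`, `C ≥ 1`, and there is `n₀` with `φ_{n₀} ≠ 0`
such that for every `n ≥ n₀` there is `n' ∈ {n+1, …, n+m}` with `|φ_{n'}| ≥ |φ_n|/C`, then
`limsup |φ_n|^{1/n} ≥ 1/C`; in particular the radius of convergence of `Σ φ_n z^n` is at
most `C < ∞`. -/
theorem stmt1 (φ : ℕ → ℂ) (m : ℕ) (hm : 1 ≤ m) (C : ℝ) (hC : 1 ≤ C)
    (h : ∃ n₀ : ℕ, φ n₀ ≠ 0 ∧ ∀ n, n₀ ≤ n → ∃ n' : ℕ, n < n' ∧ n' ≤ n + m ∧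
      ‖φ n‖ / C ≤ ‖φ n'‖) :
    ENNReal.ofReal (1 / C) ≤
      Filter.limsup (fun n : ℕ => (‖φ n‖₊ : ℝ≥0∞) ^ (1 / (n : ℝ))) Filter.atTop :=
  stmt1_general φ m C hC h
end

section
/- Let h be analytic in a neighborhood of the closed disk of radius r centered at 0, and let ξ with |ξ| < r. Let (q_n) be a sequence of polynomials of degree ≤ M whose coefficients are uniformly bounded, and suppose for each n the function z ↦ (q_n(z) h(z) − (z−ξ) P_n(z))/z^{n+1} is analytic on D_r for some polynomial P_n of degree < n. Then limsup_{n→∞} |q_n(ξ) h(ξ)|^{1/n} ≤ |ξ|/r. -/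
/-!
Fix `‖ξ‖ < R < r`. Writing `q_n h = (z - ξ) P_n + z^(n+1) g_n`, Cauchy's formula for `g_n` at `ξ`
on the circle `|z| = R` expresses `g_n ξ` through `q_n h / (z^(n+1) (z - ξ))`, because
`P_n(z) / z^(n+1)` integrates to zero when `deg P_n < n` (it is the `n`-th Taylor coefficient of
`P_n`). Since the `q_n h` are uniformly bounded on the circle, `|q_n(ξ) h(ξ)| = |ξ|^(n+1) |g_n ξ|`
is `O((|ξ|/R)^n)`, so the `n`-th roots have `limsup ≤ |ξ|/R`; then let `R → r`.
-/

open Filter Polynomial Metric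

open Complex Real Topology

theorem Polynomial.iteratedDeriv_eval {𝕜 : Type*} [NontriviallyNormedField 𝕜] (p : 𝕜[X])
    (n : ℕ) : iteratedDeriv n (fun x => p.eval x) = fun x => (derivative^[n] p).eval x := by
  induction n with
  | zero => simp
  | succ n ih =>
    ext x
    rw [iteratedDeriv_succ, ih, Function.iterate_succ_apply', Polynomial.deriv]

theorem Polynomial.norm_eval_le_of_natDegree_le {R : Type*} [SeminormedRing R] [NormOneClass R]
    {p : R[X]} {M : ℕ} {B : ℝ} (hp : p.natDegree ≤ M) (hB : ∀ j, ‖p.coeff j‖ ≤ B) (z : R) :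
    ‖p.eval z‖ ≤ (M + 1) * B * max 1 ‖z‖ ^ M := by
  rw [eval_eq_sum_range' (Nat.lt_succ_of_le hp)]
  calc ‖∑ j ∈ Finset.range (M + 1), p.coeff j * z ^ j‖
      ≤ ∑ j ∈ Finset.range (M + 1), ‖p.coeff j * z ^ j‖ := norm_sum_le _ _
    _ ≤ ∑ _j ∈ Finset.range (M + 1), B * max 1 ‖z‖ ^ M := by
        refine Finset.sum_le_sum fun j hj => (norm_mul_le _ _).trans ?_
        have hzj : ‖z ^ j‖ ≤ max 1 ‖z‖ ^ M :=
          calc ‖z ^ j‖ ≤ ‖z‖ ^ j := norm_pow_le _ _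
            _ ≤ max 1 ‖z‖ ^ j := pow_le_pow_left₀ (norm_nonneg _) (le_max_right _ _) _
            _ ≤ max 1 ‖z‖ ^ M :=
                pow_le_pow_right₀ (le_max_left _ _) (Nat.lt_succ_iff.1 (Finset.mem_range.1 hj))
        exact mul_le_mul (hB j) hzj (norm_nonneg _) ((norm_nonneg _).trans (hB j))
    _ = (M + 1) * B * max 1 ‖z‖ ^ M := by simp; ring

theorem limsup_norm_rpow_one_div_le {E : Type*} [SeminormedAddCommGroup E] {u : ℕ → E}
    {K t : ℝ} (ht : 0 ≤ t) (hu : ∀ᶠ n in atTop, ‖u n‖ ≤ K * t ^ n) :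
    limsup (fun n : ℕ => ‖u n‖ ^ (1 / (n : ℝ))) atTop ≤ t := by
  set K' := max K 1
  have hK' : 0 < K' := zero_lt_one.trans_le (le_max_right _ _)
  have hlim : Tendsto (fun n : ℕ => K' ^ (1 / (n : ℝ)) * t) atTop (𝓝 t) := by
    simpa using ((continuousAt_const_rpow hK'.ne').tendsto.comp
      tendsto_one_div_atTop_nhds_zero_nat).mul_const t
  have hle : ∀ᶠ n : ℕ in atTop, ‖u n‖ ^ (1 / (n : ℝ)) ≤ K' ^ (1 / (n : ℝ)) * t := by
    filter_upwards [hu, eventually_ge_atTop 1] with n hn hn1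
    calc ‖u n‖ ^ (1 / (n : ℝ)) ≤ (K' * t ^ n) ^ (1 / (n : ℝ)) :=
          rpow_le_rpow (norm_nonneg _)
            (hn.trans (mul_le_mul_of_nonneg_right (le_max_left _ _) (pow_nonneg ht n)))
            (by positivity)
      _ = K' ^ (1 / (n : ℝ)) * t := by
          rw [mul_rpow hK'.le (pow_nonneg ht n), ← rpow_natCast, ← rpow_mul ht,
            mul_one_div_cancel (by positivity), rpow_one]
  calc limsup (fun n : ℕ => ‖u n‖ ^ (1 / (n : ℝ))) atTop
      ≤ limsup (fun n : ℕ => K' ^ (1 / (n : ℝ)) * t) atTop :=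
        limsup_le_limsup hle
          (isBoundedUnder_of ⟨0, fun n => by positivity⟩).isCoboundedUnder_le
          hlim.isBoundedUnder_le
    _ = t := hlim.limsup_eq

theorem circleIntegral_one_div_sub_pow_smul_eval_eq_zero {P : ℂ[X]} {n : ℕ} (hP : P.degree < n)
    (c : ℂ) {R : ℝ} (hR : 0 < R) :
    ∮ z in C(c, R), (1 / (z - c) ^ (n + 1)) • P.eval z = 0 := by
  rw [P.differentiable.differentiableOn.circleIntegral_one_div_sub_center_pow_smul hR n,
    P.iteratedDeriv_eval, iterate_derivative_eq_zero_of_degree_lt hP]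
  simp

theorem circleIntegral_inv_pow_mul_sub_smul_eq {F G : ℂ → ℂ} {P : ℂ[X]} {n : ℕ} {R : ℝ} {ξ : ℂ}
    (hξ : ‖ξ‖ < R) (hP : P.degree < n) (hF : ContinuousOn F (sphere 0 R))
    (hG : DiffContOnCl ℂ G (ball 0 R))
    (heq : ∀ z ∈ sphere (0 : ℂ) R, F z - (z - ξ) * P.eval z = z ^ (n + 1) * G z) :
    ∮ z in C(0, R), (z ^ (n + 1) * (z - ξ))⁻¹ • F z = (2 * π * I) • G ξ := by
  have hR : 0 < R := (norm_nonneg ξ).trans_lt hξ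
  have hne : ∀ z ∈ sphere (0 : ℂ) R, z ≠ 0 ∧ z - ξ ≠ 0 := fun z hz => by
    rw [mem_sphere_zero_iff_norm] at hz
    refine ⟨ne_zero_of_norm_ne_zero (hz ▸ hR.ne'), sub_ne_zero.2 ?_⟩
    rintro rfl
    exact hξ.ne hz
  have hsplit : Set.EqOn (fun z => (z - ξ)⁻¹ • G z)
      (fun z => (z ^ (n + 1) * (z - ξ))⁻¹ • F z - (1 / (z - 0) ^ (n + 1)) • P.eval z)
      (sphere 0 R) := fun z hz => by
    obtain ⟨hz0, hzξ⟩ := hne z hz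
    have hFz : F z = z ^ (n + 1) * G z + (z - ξ) * P.eval z := by
      rw [← heq z hz]; ring
    simp only [smul_eq_mul, hFz, sub_zero]
    field_simp
    ring
  have hint₁ : CircleIntegrable (fun z => (z ^ (n + 1) * (z - ξ))⁻¹ • F z) 0 R :=
    ((ContinuousOn.inv₀ (by fun_prop) fun z hz => mul_ne_zero (pow_ne_zero _ (hne z hz).1)
      (hne z hz).2).smul hF).circleIntegrable hR.le
  have hint₂ : CircleIntegrable (fun z => (1 / (z - 0) ^ (n + 1)) • P.eval z) 0 R :=
    ((continuousOn_const.div (by fun_prop : Continuous fun z : ℂ => (z - 0) ^ (n + 1)).continuousOn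
      fun z hz => by simpa using (hne z hz).1).smul
      P.continuous.continuousOn).circleIntegrable hR.le
  rw [← hG.circleIntegral_sub_inv_smul (mem_ball_zero_iff.2 hξ),
    circleIntegral.integral_congr hR.le hsplit, circleIntegral.integral_sub hint₁ hint₂,
    circleIntegral_one_div_sub_pow_smul_eval_eq_zero hP 0 hR, sub_zero]

theorem norm_le_of_sub_mul_eval_eq_pow_mul {F G : ℂ → ℂ} {P : ℂ[X]} {n : ℕ} {R C : ℝ} {ξ : ℂ}
    (hξ : ‖ξ‖ < R) (hP : P.degree < n) (hF : ContinuousOn F (sphere 0 R))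
    (hFC : ∀ z ∈ sphere (0 : ℂ) R, ‖F z‖ ≤ C) (hG : DiffContOnCl ℂ G (ball 0 R))
    (heq : ∀ z ∈ closedBall (0 : ℂ) R, F z - (z - ξ) * P.eval z = z ^ (n + 1) * G z) :
    ‖F ξ‖ ≤ C * ‖ξ‖ / (R - ‖ξ‖) * (‖ξ‖ / R) ^ n := by
  have hR : 0 < R := (norm_nonneg ξ).trans_lt hξ
  have hξR : 0 < R - ‖ξ‖ := sub_pos.2 hξ
  have hintegrand : ∀ z ∈ sphere (0 : ℂ) R,
      ‖(z ^ (n + 1) * (z - ξ))⁻¹ • F z‖ ≤ C / (R ^ (n + 1) * (R - ‖ξ‖)) := fun z hz => by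
    rw [mem_sphere_zero_iff_norm] at hz
    have hzξ : R - ‖ξ‖ ≤ ‖z - ξ‖ := hz ▸ norm_sub_norm_le z ξ
    rw [norm_smul, norm_inv, norm_mul, norm_pow, hz, inv_mul_eq_div]
    gcongr
    · exact (norm_nonneg _).trans (hFC _ (mem_sphere_zero_iff_norm.2 hz))
    · exact hFC _ (mem_sphere_zero_iff_norm.2 hz)
  have hGξ : ‖G ξ‖ ≤ R * (C / (R ^ (n + 1) * (R - ‖ξ‖))) := by
    refine le_of_mul_le_mul_left ?_ (by positivity : 0 < 2 * π)
    calc 2 * π * ‖G ξ‖ = ‖(2 * π * I) • G ξ‖ := by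
          simp [abs_of_pos pi_pos]
      _ = ‖∮ z in C(0, R), (z ^ (n + 1) * (z - ξ))⁻¹ • F z‖ := by
          rw [circleIntegral_inv_pow_mul_sub_smul_eq hξ hP hF hG
            fun z hz => heq z (sphere_subset_closedBall hz)]
      _ ≤ 2 * π * R * (C / (R ^ (n + 1) * (R - ‖ξ‖))) :=
          circleIntegral.norm_integral_le_of_norm_le_const hR.le hintegrand
      _ = 2 * π * (R * (C / (R ^ (n + 1) * (R - ‖ξ‖)))) := by ring
  calc ‖F ξ‖ = ‖ξ‖ ^ (n + 1) * ‖G ξ‖ := by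
        rw [← norm_pow, ← norm_mul, ← heq ξ (mem_closedBall_zero_iff.2 hξ.le)]
        simp
    _ ≤ ‖ξ‖ ^ (n + 1) * (R * (C / (R ^ (n + 1) * (R - ‖ξ‖)))) := by gcongr
    _ = C * ‖ξ‖ / (R - ‖ξ‖) * (‖ξ‖ / R) ^ n := by
        rw [div_pow]
        field_simp
        ring

/-- Let `h` be analytic in a neighborhood of the closed disk of radius `r`, `|ξ| < r`,
`(q_n)` polynomials of degree ≤ `M` with uniformly bounded coefficients, such that for each
`n` the function `z ↦ (q_n(z) h(z) − (z−ξ) P_n(z))/z^{n+1}` is analytic on `D_r` for some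
polynomial `P_n` of degree < `n`. Then `limsup |q_n(ξ) h(ξ)|^{1/n} ≤ |ξ|/r`. -/
theorem stmt7 (r : ℝ) (h : ℂ → ℂ)
    (hh : AnalyticOnNhd ℂ h (Metric.closedBall 0 r))
    (ξ : ℂ) (hξ : ‖ξ‖ < r)
    (M : ℕ) (q : ℕ → Polynomial ℂ) (hdeg : ∀ n, (q n).degree ≤ (M : ℕ))
    (B : ℝ) (hB : ∀ n j, ‖(q n).coeff j‖ ≤ B)
    (P : ℕ → Polynomial ℂ) (hP : ∀ n : ℕ, (P n).degree < (n : ℕ))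
    (g : ℕ → ℂ → ℂ) (hg : ∀ n, AnalyticOnNhd ℂ (g n) (Metric.ball 0 r))
    (heq : ∀ n : ℕ, ∀ z ∈ Metric.ball (0 : ℂ) r,
      (q n).eval z * h z - (z - ξ) * (P n).eval z = z ^ (n + 1) * g n z) :
    Filter.limsup (fun n : ℕ => ‖(q n).eval ξ * h ξ‖ ^ (1 / (n : ℝ)))
      Filter.atTop ≤ ‖ξ‖ / r := by
  have hr : 0 < r := (norm_nonneg ξ).trans_lt hξ
  obtain ⟨H, hH⟩ := (isCompact_closedBall (0 : ℂ) r).exists_bound_of_continuousOn hh.continuousOn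
  have hlimsup : ∀ R ∈ Set.Ioo ‖ξ‖ r,
      limsup (fun n : ℕ => ‖(q n).eval ξ * h ξ‖ ^ (1 / (n : ℝ))) atTop ≤ ‖ξ‖ / R := by
    rintro R ⟨hξR, hRr⟩
    have hsub : closedBall (0 : ℂ) R ⊆ closedBall 0 r := closedBall_subset_closedBall hRr.le
    have hq : ∀ n z, ‖(q n).eval z‖ ≤ (M + 1) * B * max 1 ‖z‖ ^ M := fun n =>
      norm_eval_le_of_natDegree_le (natDegree_le_iff_degree_le.2 (hdeg n)) (hB n)
    have hbound : ∀ n, ∀ z ∈ sphere (0 : ℂ) R,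
        ‖(q n).eval z * h z‖ ≤ (M + 1) * B * max 1 R ^ M * H := fun n z hz => by
      rw [norm_mul, ← mem_sphere_zero_iff_norm.1 hz]
      exact mul_le_mul (hq n z) (hH z (hsub (sphere_subset_closedBall hz))) (norm_nonneg _)
        ((norm_nonneg _).trans (hq n z))
    have ht : 0 ≤ ‖ξ‖ / R := div_nonneg (norm_nonneg _) (hξR.le.trans' (norm_nonneg _))
    refine limsup_norm_rpow_one_div_le ht (Eventually.of_forall fun n =>
      norm_le_of_sub_mul_eval_eq_pow_mul hξR (hP n)
        (((q n).continuous.continuousOn).mul (hh.continuousOn.mono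
          (sphere_subset_closedBall.trans hsub))) (hbound n)
        ((hg n).differentiableOn.diffContOnCl_ball (closedBall_subset_ball hRr))
        fun z hz => heq n z (closedBall_subset_ball hRr hz))
  have htendsto : Tendsto (fun R => ‖ξ‖ / R) (𝓝[<] r) (𝓝 (‖ξ‖ / r)) :=
    (tendsto_const_nhds.div tendsto_id hr.ne').mono_left nhdsWithin_le_nhds
  exact ge_of_tendsto htendsto (eventually_of_mem (Ioo_mem_nhdsLT hξ) hlimsup)
end

section
/- Let f be a formal power series that is not a polynomial, and suppose for each sufficiently large n there exist polynomials p̃_n, q̃_n with deg p̃_n ≤ n − m*, deg q̃_n ≤ m, q̃_n ≢ 0, such that q̃_n f − p̃_n vanishes to order ≥ n+1 at 0, and suppose q̃_n → q̃ (coefficient-wise) where q̃ is a polynomial of exact degree m with q̃(0) ≠ 0. Then 0 < R₀(f) < ∞, where R₀(f) is the radius of convergence of f. -/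
/-!
Comparing coefficients of `z ^ n` in `q̃ₙ f - p̃ₙ`, where `deg p̃ₙ < n`, gives the recurrence
`∑_{k ≤ m} q̃ₙ,ₖ φ_{n-k} = 0` for large `n`. As `q̃ₙ → q̃`, the coefficients `q̃ₙ,ₖ` stay bounded
while `q̃ₙ,₀` and `q̃ₙ,ₘ` stay away from `0`. Solving the recurrence for `φₙ` bounds `φ`
geometrically, so `R₀(f) > 0`. Solving it for `φ_{n-m}` shows that if `φ` decayed faster than
every geometric sequence, each backward step would gain a factor `1/2`, so `φ` would vanish
eventually and `f` would be a polynomial; hence `R₀(f) < ∞`.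
-/

open Filter Polynomial PowerSeries ENNReal Finset

theorem coeff_coe_mul_mk_eq_sum_range {R : Type*} [CommSemiring R] (b : R[X]) (φ : ℕ → R)
    {m n : ℕ} (hb : b.degree ≤ m) (hmn : m ≤ n) :
    PowerSeries.coeff n ((b : PowerSeries R) * PowerSeries.mk φ)
      = ∑ k ∈ range (m + 1), b.coeff k * φ (n - k) := by
  rw [PowerSeries.coeff_mul, Nat.sum_antidiagonal_eq_sum_range_succ_mk]
  simp only [Polynomial.coeff_coe, PowerSeries.coeff_mk]
  symm
  refine sum_subset (range_subset_range.mpr (by omega)) fun k _ hkm => ?_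
  have hmk : m < k := by simpa using hkm
  rw [coeff_eq_zero_of_degree_lt (hb.trans_lt (by exact_mod_cast hmk)), zero_mul]

theorem sum_range_coeff_mul_eq_zero_of_coeff_sub_eq_zero {R : Type*} [CommRing R] {a b : R[X]}
    {φ : ℕ → R} {m n : ℕ} (ha : a.degree < n) (hb : b.degree ≤ m) (hmn : m ≤ n)
    (h : PowerSeries.coeff n ((b : PowerSeries R) * PowerSeries.mk φ - (a : PowerSeries R)) = 0) :
    ∑ k ∈ range (m + 1), b.coeff k * φ (n - k) = 0 := by
  rwa [map_sub, Polynomial.coeff_coe, coeff_eq_zero_of_degree_lt ha, sub_zero,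
    coeff_coe_mul_mk_eq_sum_range b φ hb hmn] at h

section Recurrence

variable {𝕜 : Type*} [NormedDivisionRing 𝕜] {b x : ℕ → 𝕜} {m : ℕ} {c K : ℝ}

theorem norm_le_mul_sum_norm_prev {n : ℕ} (hc : 0 < c) (hb₀ : c ≤ ‖b 0‖)
    (hbK : ∀ k ∈ range (m + 1), ‖b k‖ ≤ K)
    (h : ∑ k ∈ range (m + 1), b k * x (n - k) = 0) :
    ‖x n‖ ≤ K / c * ∑ i ∈ range m, ‖x (n - (i + 1))‖ := by
  rw [sum_range_succ', Nat.sub_zero, add_eq_zero_iff_eq_neg'] at h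
  rw [div_mul_eq_mul_div, le_div_iff₀ hc, mul_sum]
  calc ‖x n‖ * c ≤ ‖b 0 * x n‖ := by rw [norm_mul, mul_comm]; gcongr
    _ ≤ ∑ i ∈ range m, ‖b (i + 1) * x (n - (i + 1))‖ := by rw [h, norm_neg]; exact norm_sum_le _ _
    _ ≤ ∑ i ∈ range m, K * ‖x (n - (i + 1))‖ := by
      gcongr with i hi
      rw [norm_mul]
      gcongr
      exact hbK _ (by simp at hi ⊢; omega)

theorem norm_le_mul_sum_norm_next {j : ℕ} (hc : 0 < c) (hbm : c ≤ ‖b m‖)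
    (hbK : ∀ k ∈ range (m + 1), ‖b k‖ ≤ K)
    (h : ∑ k ∈ range (m + 1), b k * x (j + m - k) = 0) :
    ‖x j‖ ≤ K / c * ∑ i ∈ range m, ‖x (j + (i + 1))‖ := by
  rw [sum_range_succ, Nat.add_sub_cancel, add_eq_zero_iff_eq_neg'] at h
  rw [div_mul_eq_mul_div, le_div_iff₀ hc, mul_sum, ← sum_range_reflect]
  calc ‖x j‖ * c ≤ ‖b m * x j‖ := by rw [norm_mul, mul_comm]; gcongr
    _ ≤ ∑ k ∈ range m, ‖b k * x (j + m - k)‖ := by rw [h, norm_neg]; exact norm_sum_le _ _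
    _ ≤ ∑ k ∈ range m, K * ‖x (j + (m - 1 - k + 1))‖ := by
      refine sum_le_sum fun k hk => ?_
      have hk := mem_range.mp hk
      rw [norm_mul, show j + (m - 1 - k + 1) = j + m - k by omega]
      gcongr
      exact hbK _ (mem_range.mpr (by omega))

end Recurrence

theorem eventually_forall_norm_le_sum_norm_add_one {ι E : Type*} [SeminormedAddCommGroup E]
    {α : Type*} {l : Filter α} {u : α → ι → E} {v : ι → E}
    (hu : ∀ k, Tendsto (fun n => u n k) l (nhds (v k))) (s : Finset ι) :
    ∀ᶠ n in l, ∀ k ∈ s, ‖u n k‖ ≤ ∑ j ∈ s, ‖v j‖ + 1 := by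
  rw [eventually_all_finset]
  intro k hk
  refine (hu k).norm.eventually (eventually_le_nhds ?_)
  exact lt_add_of_le_of_pos (single_le_sum (f := fun j => ‖v j‖) (fun _ _ => norm_nonneg _) hk)
    one_pos

theorem exists_eventually_le_pow_of_le_mul_sum_prev {a : ℕ → ℝ} {C : ℝ} {m : ℕ} (hC : 0 ≤ C)
    (h : ∀ᶠ n in atTop, a n ≤ C * ∑ i ∈ range m, a (n - (i + 1))) :
    ∃ R, 0 ≤ R ∧ ∀ᶠ n in atTop, a n ≤ R ^ n := by
  obtain ⟨N, hN⟩ := eventually_atTop.mp (h.and (eventually_ge_atTop 1))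
  set A := 1 + ∑ j ∈ range N, |a j|
  set D := C * m + 1
  have hA : 1 ≤ A := le_add_of_nonneg_right (sum_nonneg fun _ _ => abs_nonneg _)
  have hD : 1 ≤ D := le_add_of_nonneg_left (by positivity)
  have hbound : ∀ n, a n ≤ A * D ^ n := by
    intro n
    induction n using Nat.strong_induction_on with
    | _ n ih =>
      by_cases hn : N ≤ n
      · obtain ⟨hrec, hn1⟩ := hN n hn
        calc a n ≤ C * ∑ i ∈ range m, a (n - (i + 1)) := hrec
          _ ≤ C * ∑ _i ∈ range m, A * D ^ (n - 1) := by
            gcongr with i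
            exact (ih _ (by omega)).trans (by gcongr; omega)
          _ = C * m * (A * D ^ (n - 1)) := by rw [sum_const, card_range, nsmul_eq_mul, mul_assoc]
          _ ≤ D * (A * D ^ (n - 1)) := by gcongr; linarith
          _ = A * D ^ n := by rw [mul_left_comm, ← pow_succ', Nat.sub_add_cancel hn1]
      · calc a n ≤ |a n| := le_abs_self _
          _ ≤ ∑ j ∈ range N, |a j| :=
            single_le_sum (f := fun j => |a j|) (fun _ _ => abs_nonneg _)
              (mem_range.mpr (not_le.mp hn))
          _ ≤ A := by linarith
          _ ≤ A * D ^ n := le_mul_of_one_le_right (by linarith) (one_le_pow₀ hD)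
  refine ⟨A * D, by positivity, ?_⟩
  filter_upwards [eventually_ne_atTop 0] with n hn
  calc a n ≤ A * D ^ n := hbound n
    _ ≤ A ^ n * D ^ n := by gcongr; exact le_self_pow₀ hA hn
    _ = (A * D) ^ n := (mul_pow _ _ _).symm

theorem eventually_eq_zero_of_le_mul_sum_next {a : ℕ → ℝ} {C : ℝ} {m : ℕ} (hC : 0 ≤ C)
    (ha : ∀ n, 0 ≤ a n) (h : ∀ᶠ n in atTop, a n ≤ C * ∑ i ∈ range m, a (n + (i + 1)))
    (hsmall : ∀ ρ > 0, ∀ᶠ n in atTop, a n ≤ ρ ^ n) :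
    ∀ᶠ n in atTop, a n = 0 := by
  set ρ : ℝ := 1 / (2 * (C * m + 1))
  have hρ : 0 < ρ := by positivity
  have hρ1 : ρ ≤ 1 := by
    rw [div_le_one (by positivity)]; nlinarith [mul_nonneg hC (Nat.cast_nonneg (α := ℝ) m)]
  have hCρ : C * m * ρ ≤ 1 / 2 := by
    rw [mul_one_div, div_le_div_iff₀ (by positivity) two_pos]; linarith
  obtain ⟨N, hN⟩ := eventually_atTop.mp (h.and (hsmall ρ hρ))
  -- Each use of the recurrence gains the factor `C m ρ ≤ 1/2` on the bound `a j ≤ ρ ^ j`.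
  have hdecay : ∀ t : ℕ, ∀ j, N ≤ j → a j ≤ (1 / 2) ^ t * ρ ^ j := by
    intro t
    induction t with
    | zero => intro j hj; simpa using (hN j hj).2
    | succ t ih =>
      intro j hj
      calc a j ≤ C * ∑ i ∈ range m, a (j + (i + 1)) := (hN j hj).1
        _ ≤ C * ∑ _i ∈ range m, (1 / 2) ^ t * ρ ^ (j + 1) := by
          gcongr with i
          exact (ih _ (by omega)).trans (mul_le_mul_of_nonneg_left
            (pow_le_pow_of_le_one hρ.le hρ1 (by omega)) (by positivity))
        _ = C * m * ρ * ((1 / 2) ^ t * ρ ^ j) := by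
          rw [sum_const, card_range, nsmul_eq_mul, pow_succ]; ring
        _ ≤ 1 / 2 * ((1 / 2) ^ t * ρ ^ j) := by gcongr
        _ = (1 / 2) ^ (t + 1) * ρ ^ j := by ring
  filter_upwards [eventually_ge_atTop N] with j hj
  have hlim : Tendsto (fun t : ℕ => (1 / 2 : ℝ) ^ t * ρ ^ j) atTop (nhds 0) := by
    simpa using (tendsto_pow_atTop_nhds_zero_of_lt_one (by norm_num : (0:ℝ) ≤ 1 / 2)
      (by norm_num)).mul_const (ρ ^ j)
  exact le_antisymm (ge_of_tendsto hlim (Eventually.of_forall fun t => hdecay t j hj)) (ha j)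

theorem enorm_rpow_one_div_le_ofReal_iff {E : Type*} [SeminormedAddGroup E] (x : E) {n : ℕ}
    (hn : n ≠ 0) {ρ : ℝ} (hρ : 0 ≤ ρ) :
    (‖x‖₊ : ℝ≥0∞) ^ (1 / (n : ℝ)) ≤ ENNReal.ofReal ρ ↔ ‖x‖ ≤ ρ ^ n := by
  rw [one_div, ENNReal.rpow_inv_le_iff (by positivity), ENNReal.rpow_natCast,
    ← ENNReal.ofReal_pow hρ, ← ofReal_coe_nnreal, coe_nnnorm,
    ENNReal.ofReal_le_ofReal_iff (by positivity)]

section RootTest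

variable {E : Type*} [SeminormedAddGroup E] {φ : ℕ → E} {ρ : ℝ}

theorem limsup_enorm_rpow_le_ofReal (hρ : 0 ≤ ρ) (h : ∀ᶠ n in atTop, ‖φ n‖ ≤ ρ ^ n) :
    limsup (fun n : ℕ => (‖φ n‖₊ : ℝ≥0∞) ^ (1 / (n : ℝ))) atTop ≤ ENNReal.ofReal ρ := by
  refine limsup_le_of_le (by isBoundedDefault) ?_
  filter_upwards [h, eventually_ne_atTop 0] with n hn hn0
  exact (enorm_rpow_one_div_le_ofReal_iff (φ n) hn0 hρ).mpr hn

theorem eventually_norm_le_pow_of_limsup_lt (hρ : 0 ≤ ρ)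
    (h : limsup (fun n : ℕ => (‖φ n‖₊ : ℝ≥0∞) ^ (1 / (n : ℝ))) atTop < ENNReal.ofReal ρ) :
    ∀ᶠ n in atTop, ‖φ n‖ ≤ ρ ^ n := by
  filter_upwards [eventually_lt_of_limsup_lt h, eventually_ne_atTop 0] with n hn hn0
  exact (enorm_rpow_one_div_le_ofReal_iff (φ n) hn0 hρ).mp hn.le

end RootTest

theorem stmt12_general (φ : ℕ → ℂ) (hnotpoly : ¬ ∃ N : ℕ, ∀ n, N ≤ n → φ n = 0)
    (m mstar : ℕ) (h1 : 1 ≤ mstar)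
    (p q : ℕ → Polynomial ℂ) (n₀ : ℕ)
    (hp : ∀ n, n₀ ≤ n → (p n).degree ≤ ((n - mstar : ℕ) : ℕ))
    (hq : ∀ n, n₀ ≤ n → (q n).degree ≤ (m : ℕ) ∧ q n ≠ 0)
    (hvan : ∀ n, n₀ ≤ n → ∀ j, j ≤ n →
      (PowerSeries.coeff (R := ℂ) j)
        ((q n : PowerSeries ℂ) * PowerSeries.mk φ - (p n : PowerSeries ℂ)) = 0)
    (Q : Polynomial ℂ) (hQdeg : Q.natDegree = m) (hQ0 : Q.coeff 0 ≠ 0)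
    (hconv : ∀ j, Filter.Tendsto (fun n => (q n).coeff j) Filter.atTop (nhds (Q.coeff j))) :
    0 < Filter.limsup (fun n : ℕ => (‖φ n‖₊ : ℝ≥0∞) ^ (1 / (n : ℝ))) Filter.atTop ∧
    Filter.limsup (fun n : ℕ => (‖φ n‖₊ : ℝ≥0∞) ^ (1 / (n : ℝ))) Filter.atTop < ⊤ := by
  have hQm : Q.coeff m ≠ 0 := by
    rw [← hQdeg]
    exact leadingCoeff_ne_zero.mpr (by rintro rfl; exact hQ0 (coeff_zero 0))
  have hrec : ∀ᶠ n in atTop, ∑ k ∈ range (m + 1), (q n).coeff k * φ (n - k) = 0 := by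
    filter_upwards [eventually_ge_atTop n₀, eventually_ge_atTop m, eventually_gt_atTop 0]
      with n hn₀ hmn hn
    exact sum_range_coeff_mul_eq_zero_of_coeff_sub_eq_zero
      ((hp n hn₀).trans_lt (by exact_mod_cast Nat.sub_lt hn h1)) (hq n hn₀).1 hmn
      (hvan n hn₀ n le_rfl)
  set K := ∑ k ∈ range (m + 1), ‖Q.coeff k‖ + 1
  have hK := eventually_forall_norm_le_sum_norm_add_one hconv (range (m + 1))
  have hlow : ∀ k, Q.coeff k ≠ 0 → ∀ᶠ n in atTop, ‖Q.coeff k‖ / 2 ≤ ‖(q n).coeff k‖ :=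
    fun k hk => (hconv k).norm.eventually (eventually_ge_nhds (half_lt_self (norm_pos_iff.mpr hk)))
  constructor
  · refine pos_iff_ne_zero.mpr fun hzero => hnotpoly ?_
    have hnext : ∀ᶠ n in atTop,
        ‖φ n‖ ≤ K / (‖Q.coeff m‖ / 2) * ∑ i ∈ range m, ‖φ (n + (i + 1))‖ := by
      filter_upwards [tendsto_add_atTop_nat m |>.eventually (hrec.and (hK.and (hlow m hQm)))]
        with n ⟨hn, hnK, hnm⟩
      exact norm_le_mul_sum_norm_next (by positivity) hnm hnK hn
    have hsmall : ∀ ρ > 0, ∀ᶠ n in atTop, ‖φ n‖ ≤ ρ ^ n := fun ρ hρ =>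
      eventually_norm_le_pow_of_limsup_lt hρ.le (hzero ▸ ofReal_pos.mpr hρ)
    obtain ⟨N, hN⟩ := eventually_atTop.mp
      (eventually_eq_zero_of_le_mul_sum_next (by positivity) (fun n => norm_nonneg _) hnext hsmall)
    exact ⟨N, fun n hn => norm_eq_zero.mp (hN n hn)⟩
  · have hprev : ∀ᶠ n in atTop,
        ‖φ n‖ ≤ K / (‖Q.coeff 0‖ / 2) * ∑ i ∈ range m, ‖φ (n - (i + 1))‖ := by
      filter_upwards [hrec, hK, hlow 0 hQ0] with n hn hnK hn0
      exact norm_le_mul_sum_norm_prev (by positivity) hn0 hnK hn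
    obtain ⟨R, hR, hle⟩ := exists_eventually_le_pow_of_le_mul_sum_prev (by positivity) hprev
    exact (limsup_enorm_rpow_le_ofReal hR hle).trans_lt ofReal_lt_top

/-- Let `f = Σ φ_n z^n` be a formal power series that is not a polynomial, and suppose for
each `n ≥ n₀` there are polynomials `p̃_n, q̃_n` with `deg p̃_n ≤ n − m*`, `deg q̃_n ≤ m`,
`q̃_n ≠ 0`, such that `q̃_n f − p̃_n` vanishes to order ≥ `n+1` at `0`, and `q̃_n → q̃`
coefficient-wise, where `q̃` has exact degree `m` and `q̃(0) ≠ 0`. Then `0 < R₀(f) < ∞`,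
i.e. `0 < limsup |φ_n|^{1/n} < ∞`. -/
theorem stmt12 (φ : ℕ → ℂ) (hnotpoly : ¬ ∃ N : ℕ, ∀ n, N ≤ n → φ n = 0)
    (m mstar : ℕ) (h1 : 1 ≤ mstar) (h2 : mstar ≤ m)
    (p q : ℕ → Polynomial ℂ) (n₀ : ℕ)
    (hp : ∀ n, n₀ ≤ n → (p n).degree ≤ ((n - mstar : ℕ) : ℕ))
    (hq : ∀ n, n₀ ≤ n → (q n).degree ≤ (m : ℕ) ∧ q n ≠ 0)
    (hvan : ∀ n, n₀ ≤ n → ∀ j, j ≤ n →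
      (PowerSeries.coeff (R := ℂ) j)
        ((q n : PowerSeries ℂ) * PowerSeries.mk φ - (p n : PowerSeries ℂ)) = 0)
    (Q : Polynomial ℂ) (hQdeg : Q.natDegree = m) (hQ0 : Q.coeff 0 ≠ 0)
    (hconv : ∀ j, Filter.Tendsto (fun n => (q n).coeff j) Filter.atTop (nhds (Q.coeff j))) :
    0 < Filter.limsup (fun n : ℕ => (‖φ n‖₊ : ℝ≥0∞) ^ (1 / (n : ℝ))) Filter.atTop ∧
    Filter.limsup (fun n : ℕ => (‖φ n‖₊ : ℝ≥0∞) ^ (1 / (n : ℝ))) Filter.atTop < ⊤ :=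
  stmt12_general φ hnotpoly m mstar h1 p q n₀ hp hq hvan Q hQdeg hQ0 hconv
end

section
/- Let d ≥ 1, let f_1, ..., f_d be formal power series, and suppose there exist complex constants c_1, ..., c_d, not all zero, such that Σ_k c_k f_k is a polynomial. Then for each sufficiently large n, there exists a nonzero polynomial Q_n with deg Q_n ≤ d − 1 and polynomials P_{n,k} with deg P_{n,k} ≤ n − 1 (k = 1,...,d) such that each Q_n f_k − P_{n,k} vanishes to order at least n+1 at z = 0. (Hence the Hermite–Padé denominator for the multi-index (1,...,1) can be chosen with degree strictly less than d.) -/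
/-!
If `∑ c_k f_k = P` with `c ≠ 0`, then for `n ≥ d + deg P` and `deg Q < d` the `n`-th
coefficient of `Q P` vanishes, so the vector `(coeff n (Q f_k))_k` lies in the hyperplane
`∑ c_k v_k = 0` of `ℂ^d`. A linear map from the `d`-dimensional space of polynomials of degree
`< d` into a hyperplane of `ℂ^d` has a nonzero kernel element `Q`; since the `n`-th coefficient
of each `Q f_k` vanishes, `P_k := trunc n (Q f_k)` matches `Q f_k` up to order `n + 1`.
-/

open Polynomial PowerSeries Module

theorem Polynomial.degree_le_pred_of_degree_lt {R : Type*} [Semiring R] {p : R[X]} {n : ℕ}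
    (h : p.degree < n) : p.degree ≤ ↑(n - 1) := by
  rw [degree_le_iff_coeff_zero]
  intro m hm
  have hm : n - 1 < m := by exact_mod_cast hm
  exact (degree_lt_iff_coeff_zero p n).1 h m (by omega)

theorem Polynomial.coeff_mul_eq_zero_of_degree_lt {R : Type*} [Semiring R] {p q : R[X]} {m n : ℕ}
    (hp : p.degree < m) (hn : m + q.natDegree ≤ n) : (p * q).coeff n = 0 := by
  rw [coeff_mul]
  refine Finset.sum_eq_zero fun ij hij => ?_
  have hij : ij.1 + ij.2 = n := Finset.HasAntidiagonal.mem_antidiagonal.1 hij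
  by_cases hi : ij.1 < m
  · rw [coeff_eq_zero_of_natDegree_lt (p := q) (by omega), mul_zero]
  · rw [(degree_lt_iff_coeff_zero p m).1 hp ij.1 (by omega), zero_mul]

theorem PowerSeries.coeff_sub_trunc_eq_zero {R : Type*} [Ring R] {φ : R⟦X⟧} {n : ℕ}
    (h : coeff n φ = 0) {j : ℕ} (hj : j ≤ n) : coeff j (φ - (trunc n φ : R⟦X⟧)) = 0 := by
  rw [map_sub, Polynomial.coeff_coe, coeff_trunc]
  rcases hj.lt_or_eq with hj | rfl
  · rw [if_pos hj, sub_self]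
  · rw [if_neg (lt_irrefl j), h, sub_zero]

theorem LinearMap.ker_ne_bot_of_range_le_ker_dual {K V W : Type*} [Field K] [AddCommGroup V]
    [Module K V] [AddCommGroup W] [Module K W] [FiniteDimensional K W]
    (T : V →ₗ[K] W) {ℓ : Module.Dual K W} (hℓ : ℓ ≠ 0) (hT : range T ≤ ker ℓ)
    (hVW : finrank K W ≤ finrank K V) : ker T ≠ ⊥ := by
  intro hker
  have hlt : finrank K (ker ℓ) < finrank K W := Submodule.finrank_lt (mt ker_eq_top.1 hℓ)
  have := Submodule.finrank_mono hT
  rw [finrank_range_of_inj (ker_eq_bot.1 hker)] at this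
  omega

theorem PowerSeries.exists_ne_zero_coeff_mul_eq_zero_of_sum_smul_eq {K ι : Type*} [Field K]
    [Fintype ι] (f : ι → K⟦X⟧) {c : ι → K} (hc : c ≠ 0) {P : K[X]}
    (hP : ∑ k, c k • f k = P) {n : ℕ} (hn : Fintype.card ι + P.natDegree ≤ n) :
    ∃ Q : K[X], Q ≠ 0 ∧ Q.degree < Fintype.card ι ∧ ∀ k, coeff n ((Q : K⟦X⟧) * f k) = 0 := by
  classical
  set m := Fintype.card ι
  let T : degreeLT K m →ₗ[K] ι → K := LinearMap.pi fun k => coeff n ∘ₗ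
    LinearMap.mulRight K (f k) ∘ₗ (coeToPowerSeries.algHom K).toLinearMap ∘ₗ (degreeLT K m).subtype
  have hT (Q : degreeLT K m) (k : ι) : T Q k = coeff n (((Q : K[X]) : K⟦X⟧) * f k) := rfl
  let ℓ := Fintype.linearCombination K c
  have hℓ : ℓ ≠ 0 := by
    obtain ⟨k, hk⟩ := Function.ne_iff.1 hc
    intro h
    exact hk (by simpa [ℓ] using LinearMap.congr_fun h (Pi.single k 1))
  have hrange : LinearMap.range T ≤ LinearMap.ker ℓ := by
    rintro _ ⟨Q, rfl⟩
    rw [LinearMap.mem_ker, Fintype.linearCombination_apply]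
    calc ∑ k, T Q k • c k = coeff n (((Q : K[X]) : K⟦X⟧) * ∑ k, c k • f k) := by
          rw [Finset.mul_sum, map_sum]
          refine Finset.sum_congr rfl fun k _ => ?_
          rw [hT, mul_smul_comm, map_smul, smul_eq_mul, smul_eq_mul, mul_comm]
      _ = ((Q : K[X]) * P).coeff n := by rw [hP, ← Polynomial.coe_mul, Polynomial.coeff_coe]
      _ = 0 := coeff_mul_eq_zero_of_degree_lt (mem_degreeLT.1 Q.2) hn
  have hdim : Module.finrank K (ι → K) ≤ Module.finrank K (degreeLT K m) := by
    rw [Module.finrank_fintype_fun_eq_card, Module.finrank_eq_card_basis (degreeLT.basis K m),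
      Fintype.card_fin]
  obtain ⟨Q, hQT, hQ⟩ := Submodule.exists_mem_ne_zero_of_ne_bot
    (T.ker_ne_bot_of_range_le_ker_dual hℓ hrange hdim)
  exact ⟨Q, by simpa using hQ, mem_degreeLT.1 Q.2, fun k => congrFun (LinearMap.mem_ker.1 hQT) k⟩

theorem stmt13_general (d : ℕ) (f : Fin d → PowerSeries ℂ)
    (c : Fin d → ℂ) (hc : ∃ k, c k ≠ 0)
    (P : Polynomial ℂ) (hP : ∑ k, c k • f k = (P : PowerSeries ℂ)) :
    ∃ N : ℕ, ∀ n, N ≤ n →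
      ∃ Q : Polynomial ℂ, Q ≠ 0 ∧ Q.degree ≤ ((d - 1 : ℕ) : ℕ) ∧
        ∀ k, ∃ Pk : Polynomial ℂ, Pk.degree ≤ ((n - 1 : ℕ) : ℕ) ∧
          ∀ j, j ≤ n →
            (PowerSeries.coeff (R := ℂ) j) ((Q : PowerSeries ℂ) * f k - (Pk : PowerSeries ℂ)) = 0 := by
  refine ⟨d + P.natDegree, fun n hn => ?_⟩
  obtain ⟨Q, hQ0, hQdeg, hQf⟩ := exists_ne_zero_coeff_mul_eq_zero_of_sum_smul_eq f
    (Function.ne_iff.2 hc) hP (n := n) (by rwa [Fintype.card_fin])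
  rw [Fintype.card_fin] at hQdeg
  exact ⟨Q, hQ0, degree_le_pred_of_degree_lt hQdeg, fun k => ⟨trunc n ((Q : ℂ⟦X⟧) * f k),
    degree_le_pred_of_degree_lt (degree_trunc_lt _ n),
    fun _ hj => coeff_sub_trunc_eq_zero (hQf k) hj⟩⟩

/-- Let `f_1, …, f_d` be formal power series and suppose there are constants `c_1, …, c_d`,
not all zero, with `Σ_k c_k f_k` a polynomial. Then for each sufficiently large `n` there
is a nonzero polynomial `Q_n` with `deg Q_n ≤ d − 1` and polynomials `P_{n,k}` with
`deg P_{n,k} ≤ n − 1` such that each `Q_n f_k − P_{n,k}` vanishes to order ≥ `n+1` at `0`.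
(The Hermite–Padé denominator for the multi-index `(1,…,1)` can be chosen of degree `< d`.) -/
theorem stmt13 (d : ℕ) (hd : 1 ≤ d) (f : Fin d → PowerSeries ℂ)
    (c : Fin d → ℂ) (hc : ∃ k, c k ≠ 0)
    (P : Polynomial ℂ) (hP : ∑ k, c k • f k = (P : PowerSeries ℂ)) :
    ∃ N : ℕ, ∀ n, N ≤ n →
      ∃ Q : Polynomial ℂ, Q ≠ 0 ∧ Q.degree ≤ ((d - 1 : ℕ) : ℕ) ∧
        ∀ k, ∃ Pk : Polynomial ℂ, Pk.degree ≤ ((n - 1 : ℕ) : ℕ) ∧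
          ∀ j, j ≤ n →
            (PowerSeries.coeff (R := ℂ) j) ((Q : PowerSeries ℂ) * f k - (Pk : PowerSeries ℂ)) = 0 :=
  stmt13_general d f c hc P hP
end

section
/- Suppose for all sufficiently large n, the polynomial Q_n of exact degree m is, up to normalization, the unique nonzero polynomial of degree ≤ m such that there exist polynomials P_{n,k}, deg P_{n,k} ≤ n − m_k, with Q_n f_k − P_{n,k} = O(z^{n+1}) for k = 1, ..., d (where Σ m_k = m). Then there do not exist polynomials p_1, ..., p_d with deg p_k ≤ m_k − 1, not all zero, such that Σ_k p_k f_k is a polynomial; i.e., the system f = (f_1, ..., f_d) is algebraically independent with respect to (m_1, ..., m_d). -/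
/-!
For large `n`, the interpolation conditions on `Q` form a linear map `T` from polynomials of
degree `≤ m` (dimension `m + 1`) to `ℂ^m`, and the Hermite–Padé denominators are exactly the
nonzero vectors of its kernel; uniqueness up to a constant forces `dim ker T ≤ 1`, so `T` is onto.
A relation `∑ p_k f_k = P` with `deg p_k < m_k` gives, once `n > m + deg P`,
`∑_{k, i} p_{k,i} [z^{n-i}] (Q f_k) = [z^n] (Q P) = 0` for every `Q`: a nonzero linear functional
vanishing on the range of `T`, which is impossible.
-/

open Polynomial PowerSeries

/-- `Q` is a solution of the `(n, (m_1, …, m_d))` Hermite–Padé problem for the system `f`: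
`Q ≠ 0`, `deg Q ≤ m_1 + ⋯ + m_d`, and for each `k` there is a polynomial `P_k` with
`deg P_k ≤ n − m_k` and `Q f_k − P_k = O(z^{n+1})`. -/
def IsHPDenominator {d : ℕ} (f : Fin d → PowerSeries ℂ) (mk : Fin d → ℕ)
    (n : ℕ) (Q : Polynomial ℂ) : Prop :=
  Q ≠ 0 ∧ Q.degree ≤ ((∑ k, mk k : ℕ) : ℕ) ∧
  ∀ k, ∃ P : Polynomial ℂ, P.degree ≤ ((n - mk k : ℕ) : ℕ) ∧
    ∀ j, j ≤ n →
      (PowerSeries.coeff (R := ℂ) j) ((Q : PowerSeries ℂ) * f k - (P : PowerSeries ℂ)) = 0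

abbrev HPIndex {d : ℕ} (mk : Fin d → ℕ) : Type := Σ k : Fin d, Fin (mk k)

theorem Polynomial.mem_degreeLT_succ_iff {R : Type*} [Semiring R] {n : ℕ} {p : R[X]} :
    p ∈ degreeLT R (n + 1) ↔ p.degree ≤ n := by
  rw [degreeLT_succ_eq_degreeLE, mem_degreeLE]

theorem PowerSeries.coeff_coe_mul_eq_sum_fin {R : Type*} [CommSemiring R] {p : R[X]} {M n : ℕ}
    (hp : p.natDegree < M) (hM : M ≤ n + 1) (g : R⟦X⟧) :
    coeff n ((p : R⟦X⟧) * g) = ∑ i : Fin M, p.coeff i * coeff (n - i) g := by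
  rw [coeff_mul, Finset.Nat.sum_antidiagonal_eq_sum_range_succ_mk, Fin.sum_univ_eq_sum_range
    (fun i => p.coeff i * coeff (n - i) g)]
  simp only [Polynomial.coeff_coe]
  refine (Finset.sum_subset (Finset.range_subset_range.mpr hM) fun i _ hi => ?_).symm
  rw [coeff_eq_zero_of_natDegree_lt (hp.trans_le (by simpa using hi)), zero_mul]

theorem LinearMap.surjective_of_finrank_le_add_finrank_ker {K V W : Type*} [DivisionRing K]
    [AddCommGroup V] [Module K V] [AddCommGroup W] [Module K W] [FiniteDimensional K V]
    [FiniteDimensional K W] {T : V →ₗ[K] W}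
    (h : Module.finrank K W + Module.finrank K (ker T) ≤ Module.finrank K V) :
    Function.Surjective T := by
  rw [← range_eq_top]
  refine Submodule.eq_top_of_finrank_eq (le_antisymm (Submodule.finrank_le _) ?_)
  have := T.finrank_range_add_finrank_ker
  omega

section HermitePade

variable {K : Type*} [Field K] {d : ℕ}

theorem card_hpIndex (mk : Fin d → ℕ) : Fintype.card (HPIndex mk) = ∑ k, mk k := by
  simp [Fintype.card_sigma]

/-- Condition `⟨k, i⟩` is the vanishing of the coefficient of `X ^ (n - i)` in `Q f_k`: these are
the coefficients of index `n - m_k < j ≤ n` that a numerator `P_k` of degree `≤ n - m_k` cannot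
absorb. -/
noncomputable def hpConditions (f : Fin d → K⟦X⟧) (mk : Fin d → ℕ) (n : ℕ) :
    degreeLT K (∑ k, mk k + 1) →ₗ[K] HPIndex mk → K where
  toFun Q σ := coeff (n - σ.2) ((Q : K[X]) * f σ.1)
  map_add' Q Q' := by
    funext σ
    simp [add_mul]
  map_smul' c Q := by
    funext σ
    simp [Polynomial.smul_eq_C_mul, mul_assoc]

theorem hpConditions_surjective {f : Fin d → K⟦X⟧} {mk : Fin d → ℕ} {n : ℕ}
    (h : Module.finrank K (LinearMap.ker (hpConditions f mk n)) ≤ 1) :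
    Function.Surjective (hpConditions f mk n) := by
  refine LinearMap.surjective_of_finrank_le_add_finrank_ker ?_
  rw [(degreeLTEquiv K _).finrank_eq, Module.finrank_fin_fun, Module.finrank_fintype_fun_eq_card,
    card_hpIndex]
  omega

def hpCoeffs (p : Fin d → K[X]) (mk : Fin d → ℕ) : HPIndex mk → K := fun σ => (p σ.1).coeff σ.2

theorem hpCoeffs_ne_zero {p : Fin d → K[X]} {mk : Fin d → ℕ} (hp : ∀ k, (p k).natDegree < mk k)
    {k : Fin d} (hk : p k ≠ 0) : hpCoeffs p mk ≠ 0 := fun h =>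
  hk (leadingCoeff_eq_zero.mp (congrFun h ⟨k, ⟨(p k).natDegree, hp k⟩⟩))

theorem hpCoeffs_dotProduct_hpConditions {f : Fin d → K⟦X⟧} {mk : Fin d → ℕ} {n : ℕ}
    {p : Fin d → K[X]} (hp : ∀ k, (p k).natDegree < mk k) {P : K[X]}
    (hP : ∑ k, (p k : K⟦X⟧) * f k = P) (hn : ∑ k, mk k + P.natDegree < n)
    (Q : degreeLT K (∑ k, mk k + 1)) :
    hpCoeffs p mk ⬝ᵥ hpConditions f mk n Q = 0 := by
  have hmk (k : Fin d) : mk k ≤ ∑ k, mk k := Finset.single_le_sum (by simp) (Finset.mem_univ k)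
  have hQ : (Q : K[X]).natDegree ≤ ∑ k, mk k :=
    natDegree_le_iff_degree_le.mpr (mem_degreeLT_succ_iff.mp Q.2)
  calc hpCoeffs p mk ⬝ᵥ hpConditions f mk n Q
      = ∑ k, coeff n ((p k : K[X]) * ((Q : K[X]) * f k) : K⟦X⟧) := by
        simp only [dotProduct, ← Finset.univ_sigma_univ, Finset.sum_sigma]
        refine Finset.sum_congr rfl fun k _ => ?_
        rw [coeff_coe_mul_eq_sum_fin (hp k) (by have := hmk k; omega)]
        rfl
    _ = coeff n ((Q * P : K[X]) : K⟦X⟧) := by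
        rw [← map_sum, Polynomial.coe_mul, ← hP, Finset.mul_sum]
        congr 1
        exact Finset.sum_congr rfl fun k _ => by ring
    _ = 0 := by
        rw [Polynomial.coeff_coe]
        exact coeff_eq_zero_of_natDegree_lt ((natDegree_mul_le).trans_lt (by omega))

end HermitePade

section Complex

variable {d : ℕ} {f : Fin d → ℂ⟦X⟧} {mk : Fin d → ℕ} {n : ℕ}

theorem isHPDenominator_of_hpConditions_eq_zero {Q : degreeLT ℂ (∑ k, mk k + 1)}
    (hQ : hpConditions f mk n Q = 0) (hQ0 : Q ≠ 0) : IsHPDenominator f mk n Q := by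
  refine ⟨by simpa using hQ0, mem_degreeLT_succ_iff.mp Q.2, fun k => ?_⟩
  refine ⟨trunc (n - mk k + 1) ((Q : ℂ[X]) * f k), mem_degreeLT_succ_iff.mp ?_, fun j hj => ?_⟩
  · exact mem_degreeLT.mpr (degree_trunc_lt _ _)
  rw [map_sub, Polynomial.coeff_coe, coeff_trunc]
  split_ifs with hjk
  · exact sub_self _
  · have := congrFun hQ ⟨k, ⟨n - j, by omega⟩⟩
    simpa [hpConditions, Nat.sub_sub_self hj] using this

theorem finrank_ker_hpConditions_le_one {Q : ℂ[X]} (hQ : IsHPDenominator f mk n Q)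
    (huniq : ∀ Q' : ℂ[X], IsHPDenominator f mk n Q' → ∃ c : ℂ, Q' = Polynomial.C c * Q) :
    Module.finrank ℂ (LinearMap.ker (hpConditions f mk n)) ≤ 1 := by
  let Q₀ : degreeLT ℂ (∑ k, mk k + 1) := ⟨Q, mem_degreeLT_succ_iff.mpr hQ.2.1⟩
  have hker : LinearMap.ker (hpConditions f mk n) ≤ Submodule.span ℂ {Q₀} := by
    intro Q' hQ'
    rcases eq_or_ne Q' 0 with rfl | hQ'0
    · exact zero_mem _
    obtain ⟨c, hc⟩ := huniq Q' (isHPDenominator_of_hpConditions_eq_zero hQ' hQ'0)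
    refine Submodule.mem_span_singleton.mpr ⟨c, Subtype.ext ?_⟩
    simp [Q₀, hc, Polynomial.smul_eq_C_mul]
  calc Module.finrank ℂ (LinearMap.ker (hpConditions f mk n))
      ≤ Module.finrank ℂ (Submodule.span ℂ {Q₀}) := Submodule.finrank_mono hker
    _ = 1 := finrank_span_singleton fun h => hQ.1 (congrArg Subtype.val h)

end Complex

theorem stmt17_general (d : ℕ) (f : Fin d → PowerSeries ℂ)
    (mk : Fin d → ℕ) (hmk : ∀ k, 1 ≤ mk k)
    (hypo : ∃ N : ℕ, ∀ n, N ≤ n → ∃ Q : Polynomial ℂ,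
      Q.natDegree = ∑ k, mk k ∧ IsHPDenominator f mk n Q ∧
      ∀ Q' : Polynomial ℂ, IsHPDenominator f mk n Q' →
        ∃ c : ℂ, Q' = Polynomial.C c * Q) :
    ¬ ∃ p : Fin d → Polynomial ℂ, (∃ k, p k ≠ 0) ∧
        (∀ k, (p k).degree ≤ ((mk k - 1 : ℕ) : ℕ)) ∧
        ∃ P : Polynomial ℂ,
          ∑ k, (p k : PowerSeries ℂ) * f k = (P : PowerSeries ℂ) := by
  rintro ⟨p, ⟨k, hk⟩, hdeg, P, hP⟩
  obtain ⟨N, hN⟩ := hypo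
  have hp (k : Fin d) : (p k).natDegree < mk k :=
    (natDegree_le_iff_degree_le.mpr (hdeg k)).trans_lt (Nat.sub_lt (hmk k) one_pos)
  obtain ⟨Q, -, hQ, huniq⟩ := hN (N + ∑ k, mk k + P.natDegree + 1) (by omega)
  have hsurj := hpConditions_surjective (finrank_ker_hpConditions_le_one hQ huniq)
  refine hpCoeffs_ne_zero hp hk (dotProduct_eq_zero _ fun v => ?_)
  obtain ⟨Q', rfl⟩ := hsurj v
  exact hpCoeffs_dotProduct_hpConditions hp hP (by omega) Q'

/-- If for all sufficiently large `n` the Hermite–Padé denominator is unique up to a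
multiplicative constant and has exact degree `m = Σ m_k`, then there are no polynomials
`p_1, …, p_d`, not all zero, with `deg p_k ≤ m_k − 1` such that `Σ_k p_k f_k` is a
polynomial; i.e., the system `f` is algebraically independent with respect to
`(m_1, …, m_d)`. -/
theorem stmt17 (d : ℕ) (hd : 1 ≤ d) (f : Fin d → PowerSeries ℂ)
    (mk : Fin d → ℕ) (hmk : ∀ k, 1 ≤ mk k)
    (hypo : ∃ N : ℕ, ∀ n, N ≤ n → ∃ Q : Polynomial ℂ,
      Q.natDegree = ∑ k, mk k ∧ IsHPDenominator f mk n Q ∧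
      ∀ Q' : Polynomial ℂ, IsHPDenominator f mk n Q' →
        ∃ c : ℂ, Q' = Polynomial.C c * Q) :
    ¬ ∃ p : Fin d → Polynomial ℂ, (∃ k, p k ≠ 0) ∧
        (∀ k, (p k).degree ≤ ((mk k - 1 : ℕ) : ℕ)) ∧
        ∃ P : Polynomial ℂ,
          ∑ k, (p k : PowerSeries ℂ) * f k = (P : PowerSeries ℂ) :=
  stmt17_general d f mk hmk hypo
end
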